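/- Splitting implies partial erasure (contrapositive form): if there exists an isometry S : ℂ² → ℂ²⊗ℂ² with S|θ,φ⟩ = |f(θ)⟩⊗|g(φ)⟩ for some functions f, g into unit vectors, then composing with the partial trace / projection onto the first factor defines a map sending |θ,φ⟩ to the pure state |f(θ)⟩ independent of φ; since inner-product preservation forces ⟨θ,φ|θ',φ'⟩ = ⟨f(θ)|f(θ')⟩⟨g(φ)|g(φ')⟩, setting φ = φ' yields |⟨θ,φ|θ',φ⟩| ≤ |⟨f(θ)|f(θ')⟩|, and setting θ = θ' ∈ (0,π) yields |cos²(θ/2)+e^{i(φ'−φ)}sin²(θ/2)| = |⟨g(φ)|g(φ')⟩| which must be independent of θ — impossible unless e^{i(φ'−φ)} = 1, since θ ↦ |cos²(θ/2)+e^{iδ}sin²(θ/2)| is non-constant on (0,π) when e^{iδ} ≠ 1. -/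

import Mathlib

/-- The qubit state `|θ,φ⟩ = cos(θ/2)|0⟩ + e^{iφ} sin(θ/2)|1⟩ ∈ ℂ²`. -/
noncomputable def qubit (θ φ : ℝ) : EuclideanSpace ℂ (Fin 2) :=
  (WithLp.equiv 2 (Fin 2 → ℂ)).symm
    ![(Real.cos (θ / 2) : ℂ), Complex.exp (φ * Complex.I) * (Real.sin (θ / 2) : ℂ)]

lemma inner_qubit (θ θ' φ φ' : ℝ) :
    (inner ℂ (qubit θ φ) (qubit θ' φ') : ℂ) =
      ((Real.cos (θ/2) : ℂ) * Real.cos (θ'/2))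
      + Complex.exp (((φ':ℂ) - φ) * Complex.I) * ((Real.sin (θ/2) : ℂ) * Real.sin (θ'/2)) := by
  simp only [qubit, PiLp.inner_apply, Fin.sum_univ_two, WithLp.equiv_symm_apply, PiLp.toLp_apply,
    Matrix.cons_val_zero, Matrix.cons_val_one, Matrix.head_cons, RCLike.inner_apply,
    map_mul, Complex.conj_ofReal, ← Complex.exp_conj, Complex.conj_I, map_sub,
    Complex.conj_ofReal]
  rw [show ((φ':ℂ)-φ)*Complex.I = ↑φ' * Complex.I + ↑φ * -Complex.I by ring, Complex.exp_add]
  ring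

/-- Splitting implies partial erasure: if an isometry `S : ℂ² → ℂ²⊗ℂ²`
satisfies `S|θ,φ⟩ = |f(θ)⟩⊗|g(φ)⟩` for unit vectors `f(θ), g(φ)` (for all `θ ∈ (0,π)`
and all `φ`), then (i) `|⟨θ,φ|θ',φ⟩| ≤ |⟨f(θ)|f(θ')⟩|` for all `θ, θ' ∈ (0,π)`, and
(ii) `e^{i(φ'−φ)} = 1` for all `φ, φ'` — since `θ ↦ |cos²(θ/2) + e^{iδ} sin²(θ/2)|`
is non-constant on `(0,π)` when `e^{iδ} ≠ 1`, splitting is impossible. -/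
theorem splitting_implies_partial_erasure
    {E₁ E₂ T : Type*}
    [NormedAddCommGroup E₁] [InnerProductSpace ℂ E₁]
    [NormedAddCommGroup E₂] [InnerProductSpace ℂ E₂]
    [NormedAddCommGroup T] [InnerProductSpace ℂ T]
    (tensor : E₁ → E₂ → T)
    (htensor : ∀ (u u' : E₁) (v v' : E₂),
      (inner ℂ (tensor u v) (tensor u' v') : ℂ) = (inner ℂ u u' : ℂ) * (inner ℂ v v' : ℂ))
    (S : EuclideanSpace ℂ (Fin 2) →ₗᵢ[ℂ] T)
    (f : ℝ → E₁) (g : ℝ → E₂)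
    (hf : ∀ θ ∈ Set.Ioo 0 Real.pi, ‖f θ‖ = 1) (hg : ∀ φ : ℝ, ‖g φ‖ = 1)
    (hsplit : ∀ θ ∈ Set.Ioo 0 Real.pi, ∀ φ : ℝ, S (qubit θ φ) = tensor (f θ) (g φ)) :
    (∀ θ ∈ Set.Ioo 0 Real.pi, ∀ θ' ∈ Set.Ioo 0 Real.pi, ∀ φ : ℝ,
      ‖(inner ℂ (qubit θ φ) (qubit θ' φ) : ℂ)‖ ≤ ‖(inner ℂ (f θ) (f θ') : ℂ)‖) ∧
    (∀ φ φ' : ℝ, Complex.exp ((↑φ' - ↑φ) * Complex.I) = 1) := by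
  have key : ∀ θ ∈ Set.Ioo 0 Real.pi, ∀ θ' ∈ Set.Ioo 0 Real.pi, ∀ φ φ' : ℝ,
      (inner ℂ (qubit θ φ) (qubit θ' φ') : ℂ)
        = (inner ℂ (f θ) (f θ') : ℂ) * (inner ℂ (g φ) (g φ') : ℂ) := by
    intro θ hθ θ' hθ' φ φ'
    rw [← S.inner_map_map, hsplit θ hθ φ, hsplit θ' hθ' φ', htensor]
  have hgself : ∀ φ : ℝ, (inner ℂ (g φ) (g φ) : ℂ) = 1 := by
    intro φ
    rw [inner_self_eq_norm_sq_to_K, hg φ]; norm_num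
  have hfself : ∀ θ ∈ Set.Ioo 0 Real.pi, (inner ℂ (f θ) (f θ) : ℂ) = 1 := by
    intro θ hθ
    rw [inner_self_eq_norm_sq_to_K, hf θ hθ]; norm_num
  constructor
  · intro θ hθ θ' hθ' φ
    rw [key θ hθ θ' hθ' φ φ, hgself φ, mul_one]
  · intro φ φ'
    have hpi := Real.pi_pos
    have h2 : (Real.pi/2) ∈ Set.Ioo 0 Real.pi := ⟨by linarith, by linarith⟩
    have h3 : (Real.pi/3) ∈ Set.Ioo 0 Real.pi := ⟨by linarith, by linarith⟩
    have e2 := key _ h2 _ h2 φ φ'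
    have e3 := key _ h3 _ h3 φ φ'
    rw [hfself _ h2, one_mul, inner_qubit] at e2
    rw [hfself _ h3, one_mul, inner_qubit] at e3
    rw [show Real.pi/2/2 = Real.pi/4 by ring] at e2
    rw [show Real.pi/3/2 = Real.pi/6 by ring] at e3
    rw [Real.cos_pi_div_four, Real.sin_pi_div_four] at e2
    rw [Real.cos_pi_div_six, Real.sin_pi_div_six] at e3
    have r2 : ((Real.sqrt 2 : ℝ):ℂ)/2 * (((Real.sqrt 2 : ℝ):ℂ)/2) = 1/2 := by
      rw [div_mul_div_comm, show ((Real.sqrt 2:ℝ):ℂ)*((Real.sqrt 2:ℝ):ℂ) = ((2:ℝ):ℂ) by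
        norm_cast; exact Real.mul_self_sqrt (by norm_num)]
      norm_num
    have r3 : ((Real.sqrt 3 : ℝ):ℂ)/2 * (((Real.sqrt 3 : ℝ):ℂ)/2) = 3/4 := by
      rw [div_mul_div_comm, show ((Real.sqrt 3:ℝ):ℂ)*((Real.sqrt 3:ℝ):ℂ) = ((3:ℝ):ℂ) by
        norm_cast; exact Real.mul_self_sqrt (by norm_num)]
      norm_num
    push_cast at e2 e3
    rw [r2] at e2
    rw [r3] at e3
    linear_combination 4 * (e2 - e3)
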